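/- Let p ∈ ℕ, λ > 0, Σ and Σ̂ two p×p real symmetric positive semidefinite matrices, Σ_λ := Σ + λ·I_p and Σ̂_λ := Σ̂ + λ·I_p, and v ∈ ℝ^p. Then |‖Σ_λ^{1/2} v‖² − ‖Σ̂_λ^{1/2} v‖²| ≤ ‖Σ_λ^{−1/2}(Σ − Σ̂)Σ_λ^{−1/2}‖_{op} · ‖Σ_λ^{1/2} v‖². (Deterministic bound on the difference between out-of-sample and in-sample regularised prediction losses.) -/

import Mathlib

/-!
Write `A = Σ_λ^{1/2}` and `B = Σ̂_λ^{1/2}`. Both are symmetric, so `‖A v‖² - ‖B v‖² = vᵀ (A² - B²) v`,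
and `A² - B² = Σ - Σ̂` because the ridge terms `λ I` cancel. Since `Σ ⪰ 0` and `λ > 0`, `A` is
invertible, and with `w = A v` the difference becomes `wᵀ A⁻¹ (Σ - Σ̂) A⁻¹ w`, whose absolute value
is at most `‖A⁻¹ (Σ - Σ̂) A⁻¹‖_op ‖w‖²` by Cauchy–Schwarz.
-/

open Matrix

noncomputable def sqnorm {p : ℕ} (v : Fin p → ℝ) : ℝ := ∑ i, (v i) ^ 2

section
open scoped ComplexOrder
noncomputable def Matrix.PosSemidef.sqrt {n : Type*} [Fintype n] [DecidableEq n] {𝕜 : Type*}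
    [RCLike 𝕜] {A : Matrix n n 𝕜} (hA : A.PosSemidef) : Matrix n n 𝕜 :=
  (hA.1.eigenvectorUnitary : Matrix n n 𝕜) * diagonal ((↑) ∘ (√·) ∘ hA.1.eigenvalues) *
    (star hA.1.eigenvectorUnitary : Matrix n n 𝕜)
end

noncomputable def opNorm {p : ℕ} (M : Matrix (Fin p) (Fin p) ℝ) : ℝ :=
  ‖Matrix.toEuclideanCLM (𝕜 := ℝ) M‖

namespace Matrix.PosSemidef

open scoped ComplexOrder

variable {n : Type*} [Fintype n] [DecidableEq n] {𝕜 : Type*} [RCLike 𝕜] {A : Matrix n n 𝕜}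

lemma sqrt_mul_self (hA : A.PosSemidef) : hA.sqrt * hA.sqrt = A := by
  conv_rhs => rw [hA.1.spectral_theorem, Unitary.conjStarAlgAut_apply]
  have hU : star (hA.1.eigenvectorUnitary : Matrix n n 𝕜) * hA.1.eigenvectorUnitary = 1 :=
    Unitary.star_mul_self_of_mem hA.1.eigenvectorUnitary.prop
  unfold Matrix.PosSemidef.sqrt
  simp only [Matrix.mul_assoc]
  rw [← Matrix.mul_assoc (star _) _ (diagonal _ * _), hU, Matrix.one_mul,
    ← Matrix.mul_assoc (diagonal _), diagonal_mul_diagonal]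
  congr 3
  ext i
  simp only [Function.comp_apply, ← RCLike.ofReal_mul,
    Real.mul_self_sqrt (hA.eigenvalues_nonneg i)]

lemma posSemidef_sqrt (hA : A.PosSemidef) : hA.sqrt.PosSemidef := by
  unfold Matrix.PosSemidef.sqrt
  rw [star_eq_conjTranspose]
  refine PosSemidef.mul_mul_conjTranspose_same (posSemidef_diagonal_iff.mpr fun i => ?_) _
  simp only [Function.comp_apply]
  exact_mod_cast Real.sqrt_nonneg _

lemma isUnit_det_sqrt (hA : A.PosSemidef) (hdet : IsUnit A.det) : IsUnit hA.sqrt.det :=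
  isUnit_of_mul_isUnit_left (by rwa [← det_mul, hA.sqrt_mul_self])

end Matrix.PosSemidef

lemma Matrix.dotProduct_mulVec_eq_conj_inv {n α : Type*} [Fintype n] [DecidableEq n] [CommRing α]
    {A : Matrix n n α} (hA : A.IsSymm) (hdet : IsUnit A.det) (D : Matrix n n α) (v : n → α) :
    v ⬝ᵥ D *ᵥ v = (A *ᵥ v) ⬝ᵥ (A⁻¹ * D * A⁻¹) *ᵥ (A *ᵥ v) := by
  have hcancel : A * (A⁻¹ * D * A⁻¹) * A = D := by
    rw [Matrix.mul_assoc, Matrix.mul_assoc, nonsing_inv_mul _ hdet, Matrix.mul_one,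
      mul_nonsing_inv_cancel_left _ _ hdet]
  conv_lhs => rw [← hcancel]
  rw [← mulVec_mulVec, ← mulVec_mulVec, dotProduct_mulVec, ← mulVec_transpose, hA.eq]

lemma sqnorm_eq_dotProduct_self {p : ℕ} (v : Fin p → ℝ) : sqnorm v = v ⬝ᵥ v := by
  simp [sqnorm, dotProduct, sq]

lemma sqnorm_mulVec_of_isSymm {p : ℕ} {A : Matrix (Fin p) (Fin p) ℝ} (hA : A.IsSymm)
    (v : Fin p → ℝ) : sqnorm (A *ᵥ v) = v ⬝ᵥ (A * A) *ᵥ v := by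
  rw [sqnorm_eq_dotProduct_self, ← mulVec_mulVec, dotProduct_mulVec v A, ← mulVec_transpose,
    hA.eq]

lemma abs_dotProduct_mulVec_le_opNorm_mul_sqnorm {p : ℕ} (M : Matrix (Fin p) (Fin p) ℝ)
    (w : Fin p → ℝ) : |w ⬝ᵥ M *ᵥ w| ≤ opNorm M * sqnorm w := by
  set W : EuclideanSpace ℝ (Fin p) := WithLp.toLp 2 w
  have hinner : inner ℝ W (toEuclideanCLM (𝕜 := ℝ) M W) = w ⬝ᵥ M *ᵥ w :=
    inner_toEuclideanCLM M W W
  have hnorm : ‖W‖ ^ 2 = sqnorm w := EuclideanSpace.real_norm_sq_eq W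
  calc |w ⬝ᵥ M *ᵥ w| ≤ ‖W‖ * ‖toEuclideanCLM (𝕜 := ℝ) M W‖ :=
        hinner ▸ abs_real_inner_le_norm _ _
    _ ≤ ‖W‖ * (opNorm M * ‖W‖) := by
        gcongr; exact (toEuclideanCLM (𝕜 := ℝ) M).le_opNorm W
    _ = opNorm M * sqnorm w := by rw [← hnorm]; ring

theorem abs_sqnorm_mulVec_sub_sqnorm_mulVec_le {p : ℕ} {A B : Matrix (Fin p) (Fin p) ℝ}
    (hA : A.IsSymm) (hB : B.IsSymm) (hdet : IsUnit A.det) (v : Fin p → ℝ) :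
    |sqnorm (A *ᵥ v) - sqnorm (B *ᵥ v)| ≤
      opNorm (A⁻¹ * (A * A - B * B) * A⁻¹) * sqnorm (A *ᵥ v) := by
  have hdiff : sqnorm (A *ᵥ v) - sqnorm (B *ᵥ v) =
      (A *ᵥ v) ⬝ᵥ (A⁻¹ * (A * A - B * B) * A⁻¹) *ᵥ (A *ᵥ v) := by
    rw [sqnorm_mulVec_of_isSymm hA, sqnorm_mulVec_of_isSymm hB, ← dotProduct_sub, ← sub_mulVec,
      dotProduct_mulVec_eq_conj_inv hA hdet]
  rw [hdiff]
  exact abs_dotProduct_mulVec_le_opNorm_mul_sqnorm _ _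

theorem out_in_sample_loss_bound_general
    (p : ℕ) (lam : ℝ) (hlam : 0 < lam)
    (Sig Sighat : Matrix (Fin p) (Fin p) ℝ)
    (hSig : Sig.PosSemidef)
    (Sigl Sighatl : Matrix (Fin p) (Fin p) ℝ)
    (hSigl_def : Sigl = Sig + lam • 1) (hSighatl_def : Sighatl = Sighat + lam • 1)
    (hSigl : Sigl.PosSemidef) (hSighatl : Sighatl.PosSemidef)
    (v : Fin p → ℝ) :
    |sqnorm (hSigl.sqrt *ᵥ v) - sqnorm (hSighatl.sqrt *ᵥ v)| ≤
      opNorm ((hSigl.sqrt)⁻¹ * (Sig - Sighat) * (hSigl.sqrt)⁻¹) * sqnorm (hSigl.sqrt *ᵥ v) := by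
  have hSigl_pd : Sigl.PosDef := hSigl_def ▸ PosDef.posSemidef_add hSig (PosDef.one.smul hlam)
  have hdiff : hSigl.sqrt * hSigl.sqrt - hSighatl.sqrt * hSighatl.sqrt = Sig - Sighat := by
    rw [hSigl.sqrt_mul_self, hSighatl.sqrt_mul_self, hSigl_def, hSighatl_def,
      add_sub_add_right_eq_sub]
  rw [← hdiff]
  exact abs_sqnorm_mulVec_sub_sqnorm_mulVec_le
    (isHermitian_iff_isSymm.mp hSigl.posSemidef_sqrt.isHermitian)
    (isHermitian_iff_isSymm.mp hSighatl.posSemidef_sqrt.isHermitian)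
    (hSigl.isUnit_det_sqrt (isUnit_iff_isUnit_det _ |>.mp hSigl_pd.isUnit)) v

/-- deterministic bound on the difference between out-of-sample and in-sample
regularised prediction losses. -/
theorem out_in_sample_loss_bound
    (p : ℕ) (lam : ℝ) (hlam : 0 < lam)
    (Sig Sighat : Matrix (Fin p) (Fin p) ℝ)
    (hSig : Sig.PosSemidef) (hSighat : Sighat.PosSemidef)
    (Sigl Sighatl : Matrix (Fin p) (Fin p) ℝ)
    (hSigl_def : Sigl = Sig + lam • 1) (hSighatl_def : Sighatl = Sighat + lam • 1)
    (hSigl : Sigl.PosSemidef) (hSighatl : Sighatl.PosSemidef)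
    (v : Fin p → ℝ) :
    |sqnorm (hSigl.sqrt *ᵥ v) - sqnorm (hSighatl.sqrt *ᵥ v)| ≤
      opNorm ((hSigl.sqrt)⁻¹ * (Sig - Sighat) * (hSigl.sqrt)⁻¹) * sqnorm (hSigl.sqrt *ᵥ v) :=
  out_in_sample_loss_bound_general p lam hlam Sig Sighat hSig Sigl Sighatl hSigl_def hSighatl_def
    hSigl hSighatl v
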